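/- (Key estimate in the proof of the Proposition: weighted L² bound for the band spectral projector of the free Laplacian on ℝ) There exists an absolute constant C > 0 such that for every Ψ ∈ L²(ℝ), every natural number N ≥ 1, and every Schwartz function f on ℝ, ∫_ℝ |Ψ(x)|² |(P_N f)(x)|² dx ≤ C² N^{-1/2} ‖Ψ‖²_{L²(ℝ)} ‖f‖²_{L²(ℝ)}, where (P_N f)(x) = (1/(2π)) ∫_{√N ≤ |ξ| < √(N+1)} e^{i x ξ} f̂(ξ) dξ. -/

import Mathlib

/-!
The band projection is bounded pointwise, uniformly in `x`: by Cauchy–Schwarz on the band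
`S = {√N ≤ |ξ| < √(N+1)}` and Plancherel, `|P_N f(x)|² ≤ (2π)⁻¹ |S| ‖f‖²`, and
`|S| = 2(√(N+1) - √N) ≤ N^{-1/2}`. Integrating against `|Ψ|²` gives the estimate with
`C² = (2π)⁻¹`.
-/

open MeasureTheory Real
open scoped FourierTransform SchwartzMap

theorem sq_integral_norm_le_measureReal_mul_integral_norm_sq {α E : Type*} [MeasurableSpace α]
    [NormedAddCommGroup E] {μ : Measure α} [IsFiniteMeasure μ] {g : α → E} (hg : MemLp g 2 μ) :
    (∫ a, ‖g a‖ ∂μ) ^ 2 ≤ μ.real Set.univ * ∫ a, ‖g a‖ ^ 2 ∂μ := by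
  have hHolder := integral_mul_le_Lp_mul_Lq_of_nonneg Real.HolderConjugate.two_two
    (Filter.Eventually.of_forall fun a => norm_nonneg (g a))
    (Filter.Eventually.of_forall fun _ => zero_le_one)
    (by simpa using hg.norm) (by simpa using memLp_const (μ := μ) (1 : ℝ))
  simp only [mul_one, Real.rpow_two, one_pow, integral_const, smul_eq_mul,
    ← Real.sqrt_eq_rpow] at hHolder
  calc (∫ a, ‖g a‖ ∂μ) ^ 2
      ≤ (√(∫ a, ‖g a‖ ^ 2 ∂μ) * √(μ.real Set.univ)) ^ 2 :=
        pow_le_pow_left₀ (integral_nonneg fun a => norm_nonneg _) hHolder 2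
    _ = μ.real Set.univ * ∫ a, ‖g a‖ ^ 2 ∂μ := by
        rw [mul_pow, Real.sq_sqrt (integral_nonneg fun a => by positivity),
          Real.sq_sqrt measureReal_nonneg, mul_comm]

theorem volume_abs_mem_Ico_le {a b : ℝ} (hab : a ≤ b) :
    volume {ξ : ℝ | a ≤ |ξ| ∧ |ξ| < b} ≤ ENNReal.ofReal (2 * (b - a)) := by
  have hsub : {ξ : ℝ | a ≤ |ξ| ∧ |ξ| < b} ⊆ Set.Ioc (-b) (-a) ∪ Set.Ico a b := by
    rintro ξ ⟨ha, hb⟩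
    rcases le_or_gt 0 ξ with hξ | hξ
    · rw [abs_of_nonneg hξ] at ha hb
      exact Or.inr ⟨ha, hb⟩
    · rw [abs_of_neg hξ] at ha hb
      exact Or.inl ⟨by linarith, by linarith⟩
  calc volume {ξ : ℝ | a ≤ |ξ| ∧ |ξ| < b}
      ≤ volume (Set.Ioc (-b) (-a)) + volume (Set.Ico a b) :=
        (measure_mono hsub).trans (measure_union_le _ _)
    _ = ENNReal.ofReal (2 * (b - a)) := by
        rw [Real.volume_Ioc, Real.volume_Ico, ← ENNReal.ofReal_add (by linarith) (by linarith)]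
        ring_nf

theorem two_mul_sqrt_add_one_sub_sqrt_le {x : ℝ} (hx : 0 < x) :
    2 * (√(x + 1) - √x) ≤ x ^ (-(1 : ℝ) / 2) := by
  have hs : 0 < √x := Real.sqrt_pos.mpr hx
  have hst : √x ≤ √(x + 1) := Real.sqrt_le_sqrt (by linarith)
  have hrpow : x ^ (-(1 : ℝ) / 2) = (√x)⁻¹ := by
    rw [neg_div, Real.rpow_neg hx.le, Real.sqrt_eq_rpow]
  have hsq : √x ^ 2 = x := Real.sq_sqrt hx.le
  have htq : √(x + 1) ^ 2 = x + 1 := Real.sq_sqrt (by linarith)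
  rw [hrpow, ← one_div, le_div_iff₀ hs]
  nlinarith

theorem integral_exp_neg_mul_eq_fourier (f : ℝ → ℂ) (ξ : ℝ) :
    ∫ y : ℝ, Complex.exp (-(Complex.I * y * ξ)) * f y = 𝓕 f (ξ / (2 * π)) := by
  rw [Real.fourier_real_eq_integral_exp_smul]
  congr 1 with y
  rw [smul_eq_mul]
  congr 2
  push_cast
  field_simp

theorem integral_norm_sq_fourier_div_two_pi (f : 𝓢(ℝ, ℂ)) :
    ∫ ξ, ‖𝓕 f (ξ / (2 * π))‖ ^ 2 = 2 * π * ∫ x, ‖f x‖ ^ 2 := by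
  rw [Measure.integral_comp_div (fun w => ‖𝓕 f w‖ ^ 2), smul_eq_mul, abs_of_pos two_pi_pos,
    SchwartzMap.integral_norm_sq_fourier]

theorem norm_sq_fourierInv_setIntegral_le (f : 𝓢(ℝ, ℂ)) {S : Set ℝ} (hS : volume S < ⊤) (x : ℝ) :
    ‖((2 * π : ℝ) : ℂ)⁻¹ * ∫ ξ in S, Complex.exp (Complex.I * x * ξ) *
        (∫ y : ℝ, Complex.exp (-(Complex.I * y * ξ)) * f y)‖ ^ 2
      ≤ (2 * π)⁻¹ * volume.real S * ∫ x, ‖f x‖ ^ 2 := by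
  have : IsFiniteMeasure (volume.restrict S) := ⟨by rwa [Measure.restrict_apply_univ]⟩
  have hg_sq : Integrable (fun ξ => ‖𝓕 f (ξ / (2 * π))‖ ^ 2) :=
    ((memLp_two_iff_integrable_sq_norm (𝓕 f).continuous.aestronglyMeasurable).mp
      ((𝓕 f).memLp 2 (μ := volume))).comp_div two_pi_pos.ne'
  have hg : MemLp (fun ξ => 𝓕 f (ξ / (2 * π))) 2 (volume.restrict S) :=
    ((memLp_two_iff_integrable_sq_norm
      ((𝓕 f).continuous.comp (continuous_id.div_const _)).aestronglyMeasurable).mpr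
        hg_sq).restrict S
  have hnorm : ‖∫ ξ in S, Complex.exp (Complex.I * x * ξ) *
      (∫ y : ℝ, Complex.exp (-(Complex.I * y * ξ)) * f y)‖ ≤ ∫ ξ in S, ‖𝓕 f (ξ / (2 * π))‖ := by
    refine (norm_integral_le_integral_norm _).trans_eq (integral_congr_ae ?_)
    filter_upwards with ξ
    rw [integral_exp_neg_mul_eq_fourier, norm_mul, mul_assoc, ← Complex.ofReal_mul,
      Complex.norm_exp_I_mul_ofReal, one_mul, SchwartzMap.fourier_coe]
  calc _ = (2 * π)⁻¹ ^ 2 * ‖∫ ξ in S, Complex.exp (Complex.I * x * ξ) *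
        (∫ y : ℝ, Complex.exp (-(Complex.I * y * ξ)) * f y)‖ ^ 2 := by
        rw [norm_mul, norm_inv, Complex.norm_real, norm_of_nonneg two_pi_pos.le, mul_pow]
    _ ≤ (2 * π)⁻¹ ^ 2 * (volume.real S * ∫ ξ in S, ‖𝓕 f (ξ / (2 * π))‖ ^ 2) := by
        gcongr
        refine (pow_le_pow_left₀ (norm_nonneg _) hnorm 2).trans ?_
        simpa using sq_integral_norm_le_measureReal_mul_integral_norm_sq hg
    _ ≤ (2 * π)⁻¹ ^ 2 * (volume.real S * (2 * π * ∫ x, ‖f x‖ ^ 2)) := by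
        gcongr
        rw [← integral_norm_sq_fourier_div_two_pi]
        exact setIntegral_le_integral hg_sq (Filter.Eventually.of_forall fun ξ => by positivity)
    _ = (2 * π)⁻¹ * volume.real S * ∫ x, ‖f x‖ ^ 2 := by
        field_simp

/-- **Key estimate in the proof of the Proposition:** weighted `L²` bound for the band
spectral projector of the free Laplacian on `ℝ`. There is an absolute constant `C > 0`
such that for every `Ψ ∈ L²(ℝ)`, every `N ≥ 1` and every Schwartz function `f`,
`∫ |Ψ(x)|² |(P_N f)(x)|² dx ≤ C² N^{-1/2} ‖Ψ‖²_{L²} ‖f‖²_{L²}`, where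
`(P_N f)(x) = (1/(2π)) ∫_{√N ≤ |ξ| < √(N+1)} e^{ixξ} f̂(ξ) dξ` and
`f̂(ξ) = ∫ e^{-iyξ} f(y) dy`. -/
theorem weighted_band_projector_bound :
    ∃ C > (0:ℝ), ∀ (Ψ : ℝ → ℝ), MemLp Ψ 2 (volume : Measure ℝ) →
      ∀ N : ℕ, 1 ≤ N →
      ∀ f : SchwartzMap ℝ ℂ,
      (∫ x : ℝ, ‖Ψ x‖^2 *
          ‖((2*π : ℝ) : ℂ)⁻¹ *
            ∫ ξ in {ξ : ℝ | Real.sqrt N ≤ |ξ| ∧ |ξ| < Real.sqrt (N+1)},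
              Complex.exp (Complex.I * x * ξ) *
                (∫ y : ℝ, Complex.exp (-(Complex.I * y * ξ)) * f y)‖^2)
        ≤ C^2 * (N:ℝ) ^ (-(1:ℝ)/2) * (∫ x : ℝ, ‖Ψ x‖^2) * (∫ x : ℝ, ‖f x‖^2) := by
  refine ⟨√(2 * π)⁻¹, by positivity, fun Ψ hΨ N hN f => ?_⟩
  have hΨ_sq : Integrable (fun x => ‖Ψ x‖ ^ 2) := (memLp_two_iff_integrable_sq_norm hΨ.1).mp hΨ
  have hvol := volume_abs_mem_Ico_le (Real.sqrt_le_sqrt (by linarith : (N : ℝ) ≤ N + 1))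
  have hband : volume.real {ξ : ℝ | √N ≤ |ξ| ∧ |ξ| < √(N + 1)} ≤ (N : ℝ) ^ (-(1 : ℝ) / 2) :=
    ENNReal.toReal_le_of_le_ofReal (by positivity) <| hvol.trans <| ENNReal.ofReal_le_ofReal <|
      two_mul_sqrt_add_one_sub_sqrt_le (by exact_mod_cast hN)
  calc _ ≤ ∫ x, ‖Ψ x‖ ^ 2 * ((2 * π)⁻¹ * (N : ℝ) ^ (-(1 : ℝ) / 2) * ∫ x, ‖f x‖ ^ 2) := by
        refine integral_mono_of_nonneg (.of_forall fun x => by positivity)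
          (hΨ_sq.mul_const _) (.of_forall fun x => ?_)
        refine mul_le_mul_of_nonneg_left ?_ (by positivity)
        exact (norm_sq_fourierInv_setIntegral_le f (hvol.trans_lt ENNReal.ofReal_lt_top) x).trans
          (by gcongr)
    _ = _ := by
        rw [integral_mul_const, Real.sq_sqrt (by positivity)]
        ring
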